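/- Let A be an m×n real matrix, γ ≥ 1, and k a natural number with 2k < spark(A). If x, x' ∈ ℝ^{nγ} are both k-sparse and (A ⊗ ε_γ^T) x = (A ⊗ ε_γ^T) x', then their block-sum vectors agree: x^γ = x'^γ. In other words, the DK-STP measurement y = (A ⊗ ε_γ^T) x uniquely determines the block-sum vector x^γ of any k-sparse input x. -/

import Mathlib

noncomputable section
open Matrix ENNReal

/-- The matrix `A ⊗ ε_γᵀ` (each column of `A` repeated `γ` consecutive times,
scaled by `1/√γ`), with the column index set `Fin n × Fin γ` flattened to `Fin (n·γ)`. -/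
def kronEpsT {m n : ℕ} (A : Matrix (Fin m) (Fin n) ℝ) (γ : ℕ) :
    Matrix (Fin m) (Fin (n * γ)) ℝ :=
  Matrix.of fun i k =>
    A i ⟨(k : ℕ) / γ, by
      have hk := k.isLt
      rcases Nat.eq_zero_or_pos γ with h | h
      · subst h; exact absurd hk (by simp)
      · exact (Nat.div_lt_iff_lt_mul h).2 hk⟩ * (Real.sqrt (γ : ℝ))⁻¹

/-- The block-sum vector `x^γ ∈ ℝⁿ` of `x ∈ ℝ^{nγ}`:
`(x^γ)_j` is the sum of the `j`-th block of `γ` consecutive entries of `x`. -/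
def blockSum {n γ : ℕ} (x : Fin (n * γ) → ℝ) : Fin n → ℝ :=
  fun j => ∑ i : Fin γ, x (finProdFinEquiv (j, i))

/-- The block-average expansion `x̄ ∈ ℝ^{nγ}`: every entry in the `j`-th block of `γ`
consecutive entries is replaced by the block average `(x^γ)_j / γ`. -/
def blockAvg {n γ : ℕ} (x : Fin (n * γ) → ℝ) : Fin (n * γ) → ℝ :=
  fun k => blockSum x (finProdFinEquiv.symm k).1 / (γ : ℝ)

/-- The spark of `A`: the smallest number of columns of `A` that form a linearly
dependent set (`⊤` if all sets of columns are linearly independent).  Equivalently,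
the minimal size of the support of a nonzero vector in the kernel of `A`. -/
def spark {m n : ℕ} (A : Matrix (Fin m) (Fin n) ℝ) : ℕ∞ :=
  sInf {c : ℕ∞ | ∃ v : Fin n → ℝ, v ≠ 0 ∧ A.mulVec v = 0 ∧
    c = ((Function.support v).ncard : ℕ∞)}

/-- The mutual coherence `μ(A)`: the largest normalized absolute inner product
between two distinct columns of `A`. -/
def coherence {m n : ℕ} (A : Matrix (Fin m) (Fin n) ℝ) : ℝ :=
  sSup {r : ℝ | ∃ i j : Fin n, i ≠ j ∧
    r = |∑ t, A t i * A t j| /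
      (Real.sqrt (∑ t, A t i ^ 2) * Real.sqrt (∑ t, A t j ^ 2))}

/-- `A` satisfies the restricted isometry property of order `s` with constant `δ`. -/
def RIP {m n : ℕ} (A : Matrix (Fin m) (Fin n) ℝ) (s : ℕ) (δ : ℝ) : Prop :=
  ∀ v : Fin n → ℝ, (Function.support v).ncard ≤ s →
    (1 - δ) * (∑ j, v j ^ 2) ≤ (∑ i, (A.mulVec v) i ^ 2) ∧
    (∑ i, (A.mulVec v) i ^ 2) ≤ (1 + δ) * (∑ j, v j ^ 2)

/-!
Up to the nonzero factor `1/√γ`, the measurement `(A ⊗ ε_γᵀ) x` equals `A x^γ`, and block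
summation does not increase the number of nonzero entries. So `x^γ` and `x'^γ` are `k`-sparse
vectors with the same image under `A`; their difference is a `2k`-sparse kernel vector of `A`,
which vanishes since `2k < spark(A)`.
-/

lemma spark_le_ncard_support {m n : ℕ} (A : Matrix (Fin m) (Fin n) ℝ) {v : Fin n → ℝ}
    (hv : v ≠ 0) (hAv : A *ᵥ v = 0) : spark A ≤ (Function.support v).ncard :=
  sInf_le ⟨v, hv, hAv, rfl⟩

lemma eq_of_mulVec_eq_of_two_mul_lt_spark {m n k : ℕ} {A : Matrix (Fin m) (Fin n) ℝ}
    (hk : ((2 * k : ℕ) : ℕ∞) < spark A) {u v : Fin n → ℝ}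
    (hu : (Function.support u).ncard ≤ k) (hv : (Function.support v).ncard ≤ k)
    (h : A *ᵥ u = A *ᵥ v) : u = v := by
  by_contra hne
  have hkernel : A *ᵥ (u - v) = 0 := by rw [mulVec_sub, h, sub_self]
  have hsparse : (Function.support (u - v)).ncard ≤ 2 * k :=
    calc (Function.support (u - v)).ncard
        ≤ (Function.support u ∪ Function.support v).ncard :=
          Set.ncard_le_ncard (Function.support_sub u v) (Set.toFinite _)
      _ ≤ (Function.support u).ncard + (Function.support v).ncard := Set.ncard_union_le _ _
      _ ≤ 2 * k := by omega
  have := spark_le_ncard_support A (sub_ne_zero.2 hne) hkernel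
  exact hk.not_ge (this.trans (by exact_mod_cast hsparse))

lemma kronEpsT_mulVec {m n γ : ℕ} (A : Matrix (Fin m) (Fin n) ℝ) (x : Fin (n * γ) → ℝ) :
    kronEpsT A γ *ᵥ x = (Real.sqrt γ)⁻¹ • A *ᵥ blockSum x := by
  funext i
  simp only [mulVec, dotProduct, kronEpsT, of_apply, blockSum, Pi.smul_apply, smul_eq_mul,
    Finset.mul_sum]
  rw [← finProdFinEquiv.sum_comp, Fintype.sum_prod_type]
  refine Finset.sum_congr rfl fun j _ => Finset.sum_congr rfl fun r _ => ?_
  have hblock : ((finProdFinEquiv (j, r) : Fin (n * γ)) : ℕ) / γ = j := by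
    change ((r : ℕ) + γ * j) / γ = j
    rw [Nat.add_mul_div_left _ _ (Fin.pos r), Nat.div_eq_of_lt r.isLt, zero_add]
  simp only [hblock]
  ring

lemma support_blockSum_subset {n γ : ℕ} (x : Fin (n * γ) → ℝ) :
    Function.support (blockSum x) ⊆ (fun k ↦ (finProdFinEquiv.symm k).1) '' Function.support x := by
  intro j hj
  obtain ⟨r, -, hr⟩ := Finset.exists_ne_zero_of_sum_ne_zero hj
  exact ⟨finProdFinEquiv (j, r), hr, by simp⟩

lemma ncard_support_blockSum_le {n γ : ℕ} (x : Fin (n * γ) → ℝ) :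
    (Function.support (blockSum x)).ncard ≤ (Function.support x).ncard :=
  (Set.ncard_le_ncard (support_blockSum_subset x) (Set.toFinite _)).trans
    (Set.ncard_image_le (Set.toFinite _))

/-- If `2k < spark(A)`, the DK-STP measurement `(A ⊗ ε_γᵀ) x` determines
the block-sum vector `x^γ` of any `k`-sparse `x`. -/
theorem dkstp_measurement_determines_blockSum {m n γ k : ℕ} (hγ : 1 ≤ γ)
    (A : Matrix (Fin m) (Fin n) ℝ) (hk : ((2 * k : ℕ) : ℕ∞) < spark A)
    (x x' : Fin (n * γ) → ℝ)
    (hx : (Function.support x).ncard ≤ k) (hx' : (Function.support x').ncard ≤ k)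
    (h : (kronEpsT A γ).mulVec x = (kronEpsT A γ).mulVec x') :
    blockSum x = blockSum x' := by
  have hscale : (Real.sqrt γ)⁻¹ ≠ 0 := by positivity
  have hA : A *ᵥ blockSum x = A *ᵥ blockSum x' := by
    rw [kronEpsT_mulVec, kronEpsT_mulVec] at h
    exact smul_right_injective _ hscale h
  exact eq_of_mulVec_eq_of_two_mul_lt_spark hk ((ncard_support_blockSum_le x).trans hx)
    ((ncard_support_blockSum_le x').trans hx') hA
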